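/- Let n be a positive integer and let d be a diagonal sequence of some partition of n such that exactly one partition α of n satisfies δ(α) = d. Then there is a positive integer q with n = q(q+1)/2, d = (1, 2, …, q−1, q), and the unique partition is α = (q, q−1, …, 2, 1). -/

import Mathlib

/-- The `i`-th part (1-indexed) of a partition given as a list of parts; `0` beyond the end. -/
def part (α : List ℕ) (i : ℕ) : ℕ := α.getD (i - 1) 0

/-- `α` is a partition of `n`: a nonincreasing list of positive integers summing to `n`. -/
def IsPartition (n : ℕ) (α : List ℕ) : Prop :=
  α.Pairwise (· ≥ ·) ∧ (∀ x ∈ α, 0 < x) ∧ α.sum = n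

/-- The `k`-th entry of the diagonal sequence of `α`:
`d_k = |{i : 1 ≤ i ≤ k and α_i + i - 1 ≥ k}|`. -/
def diag (α : List ℕ) (k : ℕ) : ℕ :=
  ((Finset.Icc 1 k).filter (fun i => k ≤ part α i + i - 1)).card

set_option linter.unusedSectionVars false

/-- 0-indexed part. -/
def pp (α : List ℕ) (m : ℕ) : ℕ := α.getD m 0

/-- the diagonal-coordinate sequence `c_m = pp m + m`. -/
def cs (α : List ℕ) (m : ℕ) : ℕ := pp α m + m

lemma pp_eq_zero {α : List ℕ} {m : ℕ} (h : α.length ≤ m) : pp α m = 0 := by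
  simp [pp, List.getD_eq_getElem?_getD, List.getElem?_eq_none h]

lemma pp_pos {α : List ℕ} (hpos : ∀ x ∈ α, 0 < x) {m : ℕ} (h : m < α.length) :
    0 < pp α m := by
  apply hpos
  simp only [pp, List.getD_eq_getElem?_getD, List.getElem?_eq_getElem h, Option.getD_some]
  exact List.getElem_mem h

lemma pp_mono {α : List ℕ} (hs : α.Pairwise (· ≥ ·)) : ∀ {i j : ℕ}, i ≤ j → pp α j ≤ pp α i := by
  intro i j hij
  rcases Nat.lt_or_ge j α.length with hj | hj
  · have hi : i < α.length := lt_of_le_of_lt hij hj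
    simp only [pp, List.getD_eq_getElem?_getD, List.getElem?_eq_getElem hj,
      List.getElem?_eq_getElem hi, Option.getD_some]
    rcases Nat.eq_or_lt_of_le hij with rfl | hlt
    · exact le_refl _
    · exact List.pairwise_iff_getElem.mp hs i j hi hj hlt
  · rw [pp_eq_zero hj]; exact Nat.zero_le _

lemma cs_lower {α : List ℕ} (m : ℕ) : m ≤ cs α m := by simp [cs]

lemma cs_step {α : List ℕ} (hs : α.Pairwise (· ≥ ·)) (m : ℕ) : cs α (m + 1) ≤ cs α m + 1 := by
  have h := pp_mono hs (show m ≤ m + 1 by omega)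
  simp only [cs]; omega

lemma cs_of_ge {α : List ℕ} {m : ℕ} (h : α.length ≤ m) : cs α m = m := by
  simp [cs, pp_eq_zero h]

lemma cs_of_lt {α : List ℕ} (hpos : ∀ x ∈ α, 0 < x) {m : ℕ} (h : m < α.length) :
    m + 1 ≤ cs α m := by
  have := pp_pos hpos h; simp only [cs]; omega

lemma part_eq_pp (α : List ℕ) (i : ℕ) : part α i = pp α (i - 1) := rfl

/-- diag via 0-indexed counting. -/
lemma diag_eq_count (α : List ℕ) (k : ℕ) :
    diag α k = ((Finset.range k).filter (fun m => k ≤ cs α m)).card := by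
  unfold diag
  apply Finset.card_nbij' (fun i => i - 1) (fun m => m + 1)
  · intro a ha
    simp only [Finset.mem_filter, Finset.mem_Icc, Finset.mem_range, Finset.mem_coe] at ha ⊢
    obtain ⟨⟨h1, h2⟩, h3⟩ := ha
    constructor
    · omega
    · have : part α a + a - 1 = cs α (a - 1) := by
        simp only [part_eq_pp, cs]; omega
      omega
  · intro m hm
    simp only [Finset.mem_filter, Finset.mem_Icc, Finset.mem_range, Finset.mem_coe] at hm ⊢
    obtain ⟨h1, h2⟩ := hm
    refine ⟨⟨by omega, by omega⟩, ?_⟩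
    have : part α (m+1) + (m+1) - 1 = cs α m := by
      simp only [part_eq_pp, cs, Nat.add_sub_cancel]; omega
    omega
  · intro a ha
    simp only [Finset.mem_filter, Finset.mem_Icc, Finset.mem_coe] at ha ⊢
    omega
  · intro a _; show a + 1 - 1 = a; omega

/-- counting below: `#{m < N : cs m < k} = k - diag k` for `N ≥ k`. -/
lemma diag_add_count_lt (α : List ℕ) {k N : ℕ} (hkN : k ≤ N) :
    diag α k + ((Finset.range N).filter (fun m => cs α m < k)).card = k := by
  rw [diag_eq_count]
  have hsub : (Finset.range N).filter (fun m => cs α m < k)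
      = (Finset.range k).filter (fun m => cs α m < k) := by
    ext m
    simp only [Finset.mem_filter, Finset.mem_range]
    constructor
    · rintro ⟨_, h2⟩; exact ⟨lt_of_le_of_lt (cs_lower m) h2, h2⟩
    · rintro ⟨h1, h2⟩; exact ⟨lt_of_lt_of_le h1 hkN, h2⟩
  rw [hsub]
  have h2 := Finset.card_filter_add_card_filter_not (s := Finset.range k)
    (p := fun m => k ≤ cs α m)
  simp only [not_le, Finset.card_range] at h2
  exact h2

-- conjugate
def conj (α : List ℕ) : List ℕ :=
  (List.range (pp α 0)).map (fun j => α.countP (fun x => decide (j < x)))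

lemma conj_length (α : List ℕ) : (conj α).length = pp α 0 := by
  simp [conj]

lemma pp_cons_zero (x : ℕ) (l : List ℕ) : pp (x :: l) 0 = x := rfl
lemma pp_cons_succ (x : ℕ) (l : List ℕ) (i : ℕ) : pp (x :: l) (i + 1) = pp l i := rfl

lemma pp_le_of_forall {l : List ℕ} {x : ℕ} (h : ∀ y ∈ l, y ≤ x) (i : ℕ) : pp l i ≤ x := by
  rcases Nat.lt_or_ge i l.length with hi | hi
  · apply h
    simp only [pp, List.getD_eq_getElem?_getD, List.getElem?_eq_getElem hi, Option.getD_some]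
    exact List.getElem_mem hi
  · rw [pp_eq_zero hi]; exact Nat.zero_le _

lemma mem_le_head {α : List ℕ} (hs : α.Pairwise (· ≥ ·)) : ∀ x ∈ α, x ≤ pp α 0 := by
  cases α with
  | nil => intro x hx; simp at hx
  | cons a l =>
    intro x hx
    rcases List.mem_cons.mp hx with rfl | hx
    · exact le_refl _
    · exact (List.pairwise_cons.mp hs).1 x hx

lemma galois {α : List ℕ} (hs : α.Pairwise (· ≥ ·)) :
    ∀ (i j : ℕ), i + 1 ≤ α.countP (fun x => decide (j < x)) ↔ j < pp α i := by
  induction α with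
  | nil => intro i j; simp [pp]
  | cons x l ih =>
    intro i j
    have hxl : ∀ y ∈ l, y ≤ x := (List.pairwise_cons.mp hs).1
    have hsl : l.Pairwise (· ≥ ·) := (List.pairwise_cons.mp hs).2
    rw [List.countP_cons]
    by_cases hjx : j < x
    · have ht : (if (decide (j < x)) = true then 1 else 0) = 1 := by simp [hjx]
      rw [ht]
      cases i with
      | zero =>
        rw [pp_cons_zero]
        constructor
        · intro _; exact hjx
        · intro _; omega
      | succ i =>
        rw [pp_cons_succ]
        constructor
        · intro h; exact (ih hsl i j).mp (by omega)
        · intro h; have := (ih hsl i j).mpr h; omega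
    · have hcl : l.countP (fun x => decide (j < x)) = 0 := by
        rw [List.countP_eq_zero]
        intro y hy
        simp only [decide_eq_true_eq]
        have := hxl y hy; omega
      have ht : (if (decide (j < x)) = true then 1 else 0) = 0 := by simp [hjx]
      rw [ht, hcl]
      constructor
      · omega
      · intro h
        exfalso
        cases i with
        | zero => rw [pp_cons_zero] at h; omega
        | succ i =>
          rw [pp_cons_succ] at h
          have := pp_le_of_forall hxl i
          omega

lemma pp_conj {α : List ℕ} (hs : α.Pairwise (· ≥ ·)) (m : ℕ) :
    pp (conj α) m = α.countP (fun x => decide (m < x)) := by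
  rcases Nat.lt_or_ge m (pp α 0) with hm | hm
  · show (conj α).getD m 0 = _
    unfold conj
    rw [List.getD_eq_getElem?_getD, List.getElem?_map, List.getElem?_range hm]
    rfl
  · have h1 : pp (conj α) m = 0 := pp_eq_zero (by rw [conj_length]; exact hm)
    have h2 : α.countP (fun x => decide (m < x)) = 0 := by
      rw [List.countP_eq_zero]
      intro y hy
      simp only [decide_eq_true_eq]
      have := mem_le_head hs y hy; omega
    rw [h1, h2]

lemma list_map_range_sum (f : ℕ → ℕ) : ∀ (M : ℕ),
    ((List.range M).map f).sum = ∑ j ∈ Finset.range M, f j := by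
  intro M
  induction M with
  | zero => simp
  | succ M ih => rw [List.range_succ, Finset.sum_range_succ, List.map_append, List.sum_append, ih]; simp

lemma sum_countP {M : ℕ} : ∀ {α : List ℕ}, (∀ x ∈ α, x ≤ M) →
    ∑ j ∈ Finset.range M, α.countP (fun x => decide (j < x)) = α.sum := by
  intro α
  induction α with
  | nil => intro _; simp
  | cons x l ih =>
    intro hb
    simp only [List.countP_cons, List.sum_cons]
    rw [Finset.sum_add_distrib, ih (fun y hy => hb y (List.mem_cons_of_mem _ hy))]
    have : ∑ j ∈ Finset.range M, (if (decide (j < x)) = true then 1 else 0) = x := by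
      simp only [decide_eq_true_eq]
      rw [Finset.sum_boole]
      have : (Finset.range M).filter (fun j => j < x) = Finset.range x := by
        ext j
        simp only [Finset.mem_filter, Finset.mem_range]
        have hx := hb x List.mem_cons_self
        omega
      rw [this, Finset.card_range, Nat.cast_id]
    omega

lemma conj_isPartition {n : ℕ} {α : List ℕ} (h : IsPartition n α) : IsPartition n (conj α) := by
  obtain ⟨hs, hpos, hsum⟩ := h
  refine ⟨?_, ?_, ?_⟩
  · unfold conj
    rw [List.pairwise_map]
    apply List.Pairwise.imp ?_ (List.pairwise_lt_range (n := pp α 0))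
    intro a b hab
    apply List.countP_mono_left
    intro x _ hx
    simp only [decide_eq_true_eq] at hx ⊢
    omega
  · intro y hy
    unfold conj at hy
    rw [List.mem_map] at hy
    obtain ⟨j, hj, rfl⟩ := hy
    rw [List.mem_range] at hj
    rw [List.countP_pos_iff]
    have hne : α ≠ [] := by
      intro hnil; rw [hnil] at hj; simp [pp] at hj
    refine ⟨α.getD 0 0, ?_, by simp only [decide_eq_true_eq]; exact hj⟩
    cases α with
    | nil => exact absurd rfl hne
    | cons a l => exact List.mem_cons_self
  · unfold conj
    rw [list_map_range_sum, sum_countP (mem_le_head hs), hsum]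

lemma conj_diag {α : List ℕ} (hs : α.Pairwise (· ≥ ·)) {k : ℕ} (hk : 1 ≤ k) :
    diag (conj α) k = diag α k := by
  have hcondC : ∀ a, 1 ≤ a → a ≤ k → ((k ≤ part (conj α) a + a - 1) ↔ a ≤ pp α (k - a)) := by
    intro a h1 h2
    rw [part_eq_pp, pp_conj hs]
    have hg := galois hs (k - a) (a - 1)
    constructor
    · intro h
      have : (k - a) + 1 ≤ α.countP (fun x => decide ((a-1) < x)) := by omega
      have := hg.mp this; omega
    · intro h
      have : (a - 1) < pp α (k - a) := by omega
      have := hg.mpr this; omega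
  have hcondA : ∀ b, 1 ≤ b → b ≤ k → ((k ≤ part α b + b - 1) ↔ k + 1 - b ≤ pp α (b - 1)) := by
    intro b h1 h2
    rw [part_eq_pp]
    omega
  unfold diag
  apply Finset.card_nbij' (fun i => k + 1 - i) (fun i => k + 1 - i)
  · intro a ha
    simp only [Finset.mem_filter, Finset.mem_Icc, Finset.mem_coe] at ha ⊢
    obtain ⟨⟨h1, h2⟩, h3⟩ := ha
    refine ⟨⟨by omega, by omega⟩, ?_⟩
    rw [hcondA (k + 1 - a) (by omega) (by omega)]
    have := (hcondC a h1 h2).mp h3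
    have he : (k + 1 - a) - 1 = k - a := by omega
    rw [he]
    omega
  · intro b hb
    simp only [Finset.mem_filter, Finset.mem_Icc, Finset.mem_coe] at hb ⊢
    obtain ⟨⟨h1, h2⟩, h3⟩ := hb
    refine ⟨⟨by omega, by omega⟩, ?_⟩
    rw [hcondC (k + 1 - b) (by omega) (by omega)]
    have := (hcondA b h1 h2).mp h3
    have he : k - (k + 1 - b) = b - 1 := by omega
    rw [he]
    omega
  · intro a ha
    simp only [Finset.mem_filter, Finset.mem_Icc, Finset.mem_coe] at ha ⊢
    omega
  · intro b hb
    simp only [Finset.mem_filter, Finset.mem_Icc, Finset.mem_coe] at hb ⊢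
    omega

-- ### the move
def mvg (α : List ℕ) (i j : ℕ) (m : ℕ) : ℕ :=
  if m < i then pp α m
  else if m + 1 < j then pp α (m + 1) + 1
  else if m + 1 = j then pp α j + 1
  else pp α m

def mvphi (i j m : ℕ) : ℕ :=
  if m < i then m else if m + 1 < j then m + 1 else if m + 1 = j then i else m

def mvpsi (i j m : ℕ) : ℕ :=
  if m < i then m else if m = i then j - 1 else if m < j then m - 1 else m

def mv (α : List ℕ) (i j : ℕ) : List ℕ := (List.range (max α.length j)).map (mvg α i j)

section Move
variable {α : List ℕ} {i j : ℕ}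
variable (hs : α.Pairwise (· ≥ ·)) (hpos : ∀ x ∈ α, 0 < x)
variable (hij : i + 2 ≤ j)
variable (hdesc : cs α (i + 1) < cs α i)
variable (hcj : cs α j = cs α i)

lemma sum_pp : ∀ {β : List ℕ} {N : ℕ}, β.length ≤ N → ∑ m ∈ Finset.range N, pp β m = β.sum := by
  intro β
  induction β with
  | nil =>
    intro N _
    apply Finset.sum_eq_zero
    intro m _
    exact pp_eq_zero (by simp)
  | cons x l ih =>
    intro N hN
    simp only [List.length_cons] at hN
    obtain ⟨N', rfl⟩ : ∃ N', N = N' + 1 := ⟨N - 1, by omega⟩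
    rw [Finset.sum_range_succ']
    have h1 : ∀ k, pp (x :: l) (k + 1) = pp l k := fun k => rfl
    have h2 : pp (x :: l) 0 = x := rfl
    simp only [h1, h2, List.sum_cons]
    rw [ih (by omega)]
    omega

include hdesc hs in
lemma move_key : pp α (i + 1) + 2 ≤ pp α i := by
  simp only [cs] at hdesc; omega

include hs hdesc in
lemma move_len : i < α.length := by
  by_contra h
  have : pp α i = 0 := pp_eq_zero (by omega)
  have := move_key hs hdesc
  omega

lemma mv_length : (mv α i j).length = max α.length j := by simp [mv]

lemma pp_mv (m : ℕ) (hij' : i < j) : pp (mv α i j) m = mvg α i j m := by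
  rcases Nat.lt_or_ge m (max α.length j) with hm | hm
  · show (mv α i j).getD m 0 = _
    unfold mv
    rw [List.getD_eq_getElem?_getD, List.getElem?_map, List.getElem?_range hm]
    rfl
  · have h1 : pp (mv α i j) m = 0 := pp_eq_zero (by rw [mv_length]; exact hm)
    have h2 : mvg α i j m = 0 := by
      unfold mvg
      rw [if_neg (by omega), if_neg (by omega), if_neg (by omega)]
      exact pp_eq_zero (by omega)
    rw [h1, h2]

include hcj hij in
lemma cs_mv (m : ℕ) : cs (mv α i j) m = cs α (mvphi i j m) := by
  have h0 : cs (mv α i j) m = mvg α i j m + m := by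
    unfold cs; rw [pp_mv m (by omega)]
  rw [h0]
  unfold mvg mvphi
  split_ifs with h1 h2 h3
  · rfl
  · show _ = pp α (m+1) + (m+1); omega
  · show _ = pp α i + i
    have : pp α j + j = pp α i + i := hcj
    omega
  · rfl

lemma mvphi_psi (m : ℕ) (h : i + 2 ≤ j) : mvpsi i j (mvphi i j m) = m := by
  unfold mvphi mvpsi; split_ifs <;> omega

lemma mvpsi_phi (m : ℕ) (h : i + 2 ≤ j) : mvphi i j (mvpsi i j m) = m := by
  unfold mvphi mvpsi; split_ifs <;> omega

lemma mvphi_lt {N m : ℕ} (hN : j ≤ N) (hm : m < N) (h : i + 2 ≤ j) : mvphi i j m < N := by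
  unfold mvphi; split_ifs <;> omega

lemma mvpsi_lt {N m : ℕ} (hN : j ≤ N) (hm : m < N) (h : i + 2 ≤ j) : mvpsi i j m < N := by
  unfold mvpsi; split_ifs <;> omega

include hs hij hdesc in
lemma mvg_antitone_succ (m : ℕ) : mvg α i j (m + 1) ≤ mvg α i j m := by
  have hkey := move_key hs hdesc
  have h01 : pp α (m+1) ≤ pp α m := pp_mono hs (by omega)
  have h12 : pp α (m+2) ≤ pp α (m+1) := pp_mono hs (by omega)
  have hnorm : pp α (m+1+1) = pp α (m+2) := rfl
  unfold mvg
  split_ifs <;>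
    first
      | omega
      | (exact le_trans (by omega : pp α (i+1) + 1 ≤ pp α i) (pp_mono hs (by omega)))
      | (have := pp_mono hs (show m + 1 ≤ j by omega); omega)
      | (have := pp_mono hs (show j ≤ m + 1 by omega); omega)
      | (have := pp_mono hs (show m + 2 ≤ j by omega); omega)
      | (have := pp_mono hs (show j ≤ m + 2 by omega); omega)
      | (have := pp_mono hs (show i + 1 ≤ m + 1 by omega); omega)
      | (have hA := pp_mono hs (show i + 1 ≤ m + 2 by omega);
         have hB := pp_mono hs (show m ≤ i by omega); omega)
      | (have hA := pp_mono hs (show i + 1 ≤ j by omega);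
         have hB := pp_mono hs (show m ≤ i by omega); omega)

include hs hij hdesc in
lemma mvg_antitone : ∀ {a b : ℕ}, a ≤ b → mvg α i j b ≤ mvg α i j a := by
  intro a b hab
  induction b with
  | zero => have : a = 0 := by omega
            subst this; exact le_refl _
  | succ b ih =>
    rcases Nat.eq_or_lt_of_le hab with rfl | hlt
    · exact le_refl _
    · exact le_trans (mvg_antitone_succ hs hij hdesc b) (ih (by omega))

include hs hij hdesc in
lemma mv_sorted : (mv α i j).Pairwise (· ≥ ·) := by
  unfold mv
  rw [List.pairwise_map]
  apply List.Pairwise.imp ?_ (List.pairwise_lt_range (n := _))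
  intro a b hab
  exact mvg_antitone hs hij hdesc (le_of_lt hab)

include hs hpos hij hdesc in
lemma mv_pos : ∀ x ∈ mv α i j, 0 < x := by
  intro x hx
  unfold mv at hx
  rw [List.mem_map] at hx
  obtain ⟨m, hm, rfl⟩ := hx
  rw [List.mem_range] at hm
  have hkey := move_key hs hdesc
  unfold mvg
  split_ifs with h1 h2 h3
  · have := pp_mono hs (show m ≤ i by omega); omega
  · omega
  · omega
  · have hml : m < α.length := by omega
    have := pp_pos hpos hml; omega

include hij hcj in
lemma mv_sum : (mv α i j).sum = α.sum := by
  set L := max α.length j with hL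
  have h1 : (mv α i j).sum = ∑ m ∈ Finset.range L, mvg α i j m := by
    unfold mv; rw [list_map_range_sum]
  have h2 : ∑ m ∈ Finset.range L, cs (mv α i j) m = ∑ m ∈ Finset.range L, cs α m := by
    apply Finset.sum_nbij' (mvphi i j) (mvpsi i j)
    · intro a ha
      rw [Finset.mem_range] at ha ⊢
      exact mvphi_lt (by omega) ha hij
    · intro a ha
      rw [Finset.mem_range] at ha ⊢
      exact mvpsi_lt (by omega) ha hij
    · intro a _; exact mvphi_psi a hij
    · intro a _; exact mvpsi_phi a hij
    · intro a _; exact cs_mv hij hcj a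
  have h3 : ∀ (β : List ℕ), ∑ m ∈ Finset.range L, cs β m
      = (∑ m ∈ Finset.range L, pp β m) + ∑ m ∈ Finset.range L, m := by
    intro β; rw [← Finset.sum_add_distrib]; rfl
  have h4 : ∑ m ∈ Finset.range L, pp (mv α i j) m = ∑ m ∈ Finset.range L, pp α m := by
    have := h2
    rw [h3, h3] at this
    omega
  have h5 : ∑ m ∈ Finset.range L, pp (mv α i j) m = ∑ m ∈ Finset.range L, mvg α i j m := by
    apply Finset.sum_congr rfl
    intro m _
    exact pp_mv m (by omega)
  have h6 : ∑ m ∈ Finset.range L, pp α m = α.sum := sum_pp (by omega)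
  omega

include hij hcj in
lemma mv_diag (k : ℕ) : diag (mv α i j) k = diag α k := by
  set N := max k (max α.length j) with hN
  have hcnt : ((Finset.range N).filter (fun m => cs (mv α i j) m < k)).card
      = ((Finset.range N).filter (fun m => cs α m < k)).card := by
    apply Finset.card_nbij' (mvphi i j) (mvpsi i j)
    · intro a ha
      simp only [Finset.mem_filter, Finset.mem_range, Finset.mem_coe] at ha ⊢
      refine ⟨mvphi_lt (by omega) ha.1 hij, ?_⟩
      rw [← cs_mv hij hcj a]; exact ha.2
    · intro a ha
      simp only [Finset.mem_filter, Finset.mem_range, Finset.mem_coe] at ha ⊢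
      refine ⟨mvpsi_lt (by omega) ha.1 hij, ?_⟩
      rw [cs_mv hij hcj (mvpsi i j a), mvpsi_phi a hij]; exact ha.2
    · intro a _; exact mvphi_psi a hij
    · intro a _; exact mvpsi_phi a hij
  have hA := diag_add_count_lt (mv α i j) (show k ≤ N by omega)
  have hB := diag_add_count_lt α (show k ≤ N by omega)
  omega

include hs hij hdesc in
lemma mv_ne : mv α i j ≠ α := by
  intro heq
  have hkey := move_key hs hdesc
  have h1 : pp (mv α i j) i = pp α (i + 1) + 1 := by
    rw [pp_mv i (by omega)]
    unfold mvg
    rw [if_neg (by omega), if_pos (by omega)]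
  rw [heq] at h1
  omega

end Move

lemma cs_mono_of_nodesc {α : List ℕ} (h : ∀ m, cs α m ≤ cs α (m + 1)) :
    ∀ (a b : ℕ), a ≤ b → cs α a ≤ cs α b := by
  intro a b hab
  induction b with
  | zero => have : a = 0 := by omega
            subst this; exact le_refl _
  | succ b ih =>
    rcases Nat.eq_or_lt_of_le hab with rfl | hlt
    · exact le_refl _
    · exact le_trans (ih (by omega)) (h b)

lemma gauss : ∀ q : ℕ, 2 * (∑ m ∈ Finset.range q, (q - m)) = q * (q + 1) := by
  intro q
  induction q with
  | zero => simp
  | succ q ih =>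
    have h1 : ∑ m ∈ Finset.range q, (q + 1 - m) = ∑ m ∈ Finset.range q, ((q - m) + 1) := by
      apply Finset.sum_congr rfl
      intro m hm
      rw [Finset.mem_range] at hm
      omega
    have hS : ∑ m ∈ Finset.range (q + 1), (q + 1 - m)
        = (∑ m ∈ Finset.range q, (q - m)) + (q + 1) := by
      rw [Finset.sum_range_succ, h1, Finset.sum_add_distrib, Finset.sum_const,
        Finset.card_range, smul_eq_mul]
      omega
    rw [hS, Nat.mul_add, ih]
    ring

lemma pp_getElem {α : List ℕ} {m : ℕ} (h : m < α.length) : pp α m = α[m]'h := by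
  simp [pp, List.getD_eq_getElem?_getD, List.getElem?_eq_getElem h]

/-- Corollary 15(1): if `d` is the diagonal sequence of exactly one partition of `n`, then
`n = q(q+1)/2` for some `q > 0`, `d = (1, 2, …, q)` (followed by zeros), and the unique
partition is `(q, q-1, …, 2, 1)`. -/
theorem diag_class_of_card_one (n : ℕ) (hn : 0 < n) (d : ℕ → ℕ)
    (huniq : ∃! α : List ℕ, IsPartition n α ∧ ∀ k, 1 ≤ k → diag α k = d k) :
    ∃ q : ℕ, 0 < q ∧ n = q * (q + 1) / 2 ∧
      (∀ k, 1 ≤ k → d k = if k ≤ q then k else 0) ∧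
      ∀ α : List ℕ, IsPartition n α → (∀ k, 1 ≤ k → diag α k = d k) →
        α = (List.range q).map fun j => q - j := by
  obtain ⟨α, ⟨hP, hd⟩, huq⟩ := huniq
  obtain ⟨hs, hpos, hsum⟩ := hP
  -- conjugate is also a solution, hence α is self-conjugate
  have hconj : conj α = α := by
    apply huq
    refine ⟨conj_isPartition ⟨hs, hpos, hsum⟩, fun k hk => ?_⟩
    rw [conj_diag hs hk]
    exact hd k hk
  -- no descent in cs α
  have hnodesc : ∀ m, cs α m ≤ cs α (m + 1) := by
    by_contra hcon
    push_neg at hcon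
    obtain ⟨i, hdesc⟩ := hcon
    have hilen : i < α.length := move_len hs hdesc
    have hex : ∃ k, i < k ∧ cs α i ≤ cs α k := by
      have h1 : cs α (α.length + cs α i + 1) = α.length + cs α i + 1 :=
        cs_of_ge (by omega)
      exact ⟨α.length + cs α i + 1, by omega, by omega⟩
    classical
    set j := Nat.find hex with hj
    have hPj : i < j ∧ cs α i ≤ cs α j := Nat.find_spec hex
    have hmin : ∀ k, k < j → ¬(i < k ∧ cs α i ≤ cs α k) := fun k hk => Nat.find_min hex hk
    have hij : i + 2 ≤ j := by
      rcases Nat.lt_or_ge j (i + 2) with h | h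
      · exfalso
        have : j = i + 1 := by omega
        rw [this] at hPj
        omega
      · exact h
    have hcj : cs α j = cs α i := by
      have hjm1 : cs α (j - 1) < cs α i := by
        have := hmin (j - 1) (by omega)
        have : ¬(cs α i ≤ cs α (j - 1)) := by
          intro hc; exact this ⟨by omega, hc⟩
        omega
      have hst : cs α j ≤ cs α (j - 1) + 1 := by
        have := cs_step hs (j - 1)
        have he : j - 1 + 1 = j := by omega
        rw [he] at this
        exact this
      omega
    have hβ : mv α i j = α := by
      apply huq
      refine ⟨⟨mv_sorted hs hij hdesc, mv_pos hs hpos hij hdesc, ?_⟩, fun k hk => ?_⟩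
      · rw [mv_sum hij hcj]; exact hsum
      · rw [mv_diag hij hcj]; exact hd k hk
    exact mv_ne hs hij hdesc hβ
  -- structure: α is the staircase
  have hmono := cs_mono_of_nodesc hnodesc
  obtain ⟨q, hq⟩ : ∃ q, α.length = q := ⟨_, rfl⟩
  have hq0 : 0 < q := by
    rcases α with _ | ⟨x, l⟩
    · simp at hsum; omega
    · simp at hq; omega
  have hpp0 : pp α 0 = q := by
    have h1 : (conj α).length = pp α 0 := conj_length α
    rw [hconj] at h1
    omega
  have hcsq : cs α q = q := cs_of_ge (by omega)
  have hppm : ∀ m, m < q → pp α m = q - m := by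
    intro m hm
    have h1 : cs α 0 ≤ cs α m := hmono 0 m (by omega)
    have h2 : cs α m ≤ cs α q := hmono m q (by omega)
    have h3 : cs α 0 = q := by simp [cs, hpp0]
    have h4 : pp α q = 0 := pp_eq_zero (by omega)
    simp only [cs] at h1 h2 h3 ⊢
    omega
  have hstair : α = (List.range q).map fun j => q - j := by
    apply List.ext_getElem
    · simp [hq]
    · intro m h1 h2
      have hmq : m < q := by omega
      have hα : α[m] = q - m := by
        rw [← pp_getElem h1]
        exact hppm m hmq
      rw [hα]
      simp
  have hnq : n = q * (q + 1) / 2 := by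
    have h1 : α.sum = ∑ m ∈ Finset.range q, (q - m) := by
      rw [hstair, list_map_range_sum]
    have := gauss q
    omega
  have hdiagstair : ∀ k, 1 ≤ k → diag α k = if k ≤ q then k else 0 := by
    intro k hk
    unfold diag
    by_cases hkq : k ≤ q
    · rw [if_pos hkq]
      rw [Finset.filter_true_of_mem, Nat.card_Icc]
      · omega
      · intro i hi
        rw [Finset.mem_Icc] at hi
        rw [part_eq_pp, hppm (i - 1) (by omega)]
        omega
    · rw [if_neg hkq]
      rw [Finset.filter_false_of_mem, Finset.card_empty]
      intro i hi
      rw [Finset.mem_Icc] at hi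
      rw [part_eq_pp]
      rcases Nat.lt_or_ge (i - 1) q with h | h
      · rw [hppm (i - 1) h]
        omega
      · rw [pp_eq_zero (by omega)]
        omega
  refine ⟨q, hq0, hnq, fun k hk => ?_, fun β hβP hβd => ?_⟩
  · rw [← hd k hk]
    exact hdiagstair k hk
  · have : β = α := huq β ⟨hβP, hβd⟩
    rw [this]
    exact hstair
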